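/- (Rigidity for the Poincaré constant.) Let π be a probability measure on X×Y with a.e.-positive density with respect to Lebesgue measure. If f ∈ L²(π^Y) satisfies f(y) = (Q_π f)(x) for π-a.e. (x,y) — equivalently ‖Q_π f‖_{L²(π)} = ‖f‖_{L²(π^Y)} with f = Q_π f π-a.e. — then f is π^Y-a.e. equal to a constant; in particular if additionally ∫_Y f dπ^Y = 0, then f = 0 π^Y-a.e. -/

import Mathlib

open MeasureTheory

noncomputable section

/-- Euclidean space `ℝ^d`, carrying Lebesgue measure. -/
abbrev E (d : ℕ) : Type := Fin d → ℝ

/-- The sub-σ-algebra of `E d × E d` generated by the first coordinate `X`. -/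
def mX (d : ℕ) : MeasurableSpace (E d × E d) := MeasurableSpace.comap Prod.fst inferInstance

/-- The sub-σ-algebra of `E d × E d` generated by the second coordinate `Y`. -/
def mY (d : ℕ) : MeasurableSpace (E d × E d) := MeasurableSpace.comap Prod.snd inferInstance

/-- Conditional expectation operator `(Q_π f) = E_π[f | X]`. -/
noncomputable def Qc {d : ℕ} (π : Measure (E d × E d)) (f : E d × E d → ℝ) : E d × E d → ℝ :=
  π[f | mX d]

/-- Conditional expectation operator `(P_π f) = E_π[f | Y]`. -/
noncomputable def Pc {d : ℕ} (π : Measure (E d × E d)) (f : E d × E d → ℝ) : E d × E d → ℝ :=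
  π[f | mY d]

/-- `T_π := P_π Q_π`, acting on functions of `y` (embedded canonically in `L²(π)`
via `(x, y) ↦ g y`); its value is a `σ(Y)`-measurable function on `E d × E d`,
identified with an element of `L²(π^Y)`. -/
noncomputable def Tc {d : ℕ} (π : Measure (E d × E d)) (g : E d → ℝ) : E d × E d → ℝ :=
  Pc π (Qc π (fun z => g z.2))

/-!
A `σ(X)`-measurable function is a function `g x` of the first coordinate alone, so the fixed-point
hypothesis says `f y = g x` for `π`-a.e. `(x, y)`. Since `π` and Lebesgue measure on the product
have the same null sets, this holds for Lebesgue-a.e. `(x, y)`; by Fubini some fibre `x₀` gives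
`f = g x₀` Lebesgue-a.e. on `Y`, hence `π^Y`-a.e. because `π^Y ≪ Lebesgue`.
-/

namespace MeasureTheory

variable {α β γ : Type*} [MeasurableSpace α] [MeasurableSpace β] {μ : Measure α} {ν : Measure β}
  {π : Measure (α × β)}

lemma Measure.AbsolutelyContinuous.map_snd_of_prod [SFinite ν] (h : π ≪ μ.prod ν) :
    π.map Prod.snd ≪ ν :=
  (h.map measurable_snd).trans <| by
    rw [Measure.map_snd_prod]
    exact Measure.AbsolutelyContinuous.rfl.smul_left _

lemma exists_ae_eq_const_of_ae_prod_eq [NeZero μ] [SFinite ν] {f : β → γ} {g : α → γ}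
    (h : ∀ᵐ z ∂μ.prod ν, f z.2 = g z.1) : ∃ c, ∀ᵐ y ∂ν, f y = c :=
  let ⟨x, hx⟩ := (Measure.ae_ae_of_ae_prod h).exists
  ⟨g x, hx⟩

lemma exists_ae_map_snd_eq_const_of_ae_eq_fst [NeZero μ] [SFinite ν]
    (hπ : π ≪ μ.prod ν) (hπ' : μ.prod ν ≪ π) {f : β → γ} {g : α → γ}
    (h : ∀ᵐ z ∂π, f z.2 = g z.1) : ∃ c, ∀ᵐ y ∂π.map Prod.snd, f y = c :=
  let ⟨c, hc⟩ := exists_ae_eq_const_of_ae_prod_eq (hπ'.ae_le h)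
  ⟨c, hπ.map_snd_of_prod.ae_le hc⟩

end MeasureTheory

theorem sinkhorn_poincare_rigidity_general
    {d : ℕ} (π : Measure (E d × E d)) [IsProbabilityMeasure π]
    (ρ : E d × E d → ℝ) (hρmeas : Measurable ρ)
    (hρpos : ∀ᵐ z ∂(volume : Measure (E d × E d)), 0 < ρ z)
    (hπ : π = volume.withDensity fun z => ENNReal.ofReal (ρ z))
    (f : E d → ℝ)
    (hfix : ∀ᵐ z ∂π, f z.2 = Qc π (fun w => f w.2) z) :
    (∃ c : ℝ, ∀ᵐ y ∂(π.map Prod.snd), f y = c) ∧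
    ((∫ y, f y ∂(π.map Prod.snd)) = 0 → ∀ᵐ y ∂(π.map Prod.snd), f y = 0) := by
  have hvol : (volume : Measure (E d × E d)) ≪ π := hπ ▸
    withDensity_absolutelyContinuous' hρmeas.ennreal_ofReal.aemeasurable
      (by filter_upwards [hρpos] with z hz using by simpa using hz)
  have hπvol : π ≪ volume := hπ ▸ withDensity_absolutelyContinuous _ _
  obtain ⟨g, -, hg⟩ := (stronglyMeasurable_condExp (m := mX d) (μ := π)
    (f := fun w => f w.2)).exists_eq_measurable_comp
  have hfix_fst : ∀ᵐ z ∂π, f z.2 = g z.1 := by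
    filter_upwards [hfix] with z hz
    rw [hz, Qc, hg, Function.comp_apply]
  rw [Measure.volume_eq_prod] at hvol hπvol
  obtain ⟨c, hc⟩ := exists_ae_map_snd_eq_const_of_ae_eq_fst hπvol hvol hfix_fst
  refine ⟨⟨c, hc⟩, fun hint => ?_⟩
  have : IsProbabilityMeasure (π.map Prod.snd) :=
    Measure.isProbabilityMeasure_map measurable_snd.aemeasurable
  have hc0 : c = 0 := by simpa [integral_congr_ae hc] using hint
  exact hc0 ▸ hc

/-- Rigidity: if `π` has an a.e.-positive density with respect to Lebesgue
measure and `f ∈ L²(π^Y)` satisfies `f(y) = (Q_π f)(x)` for `π`-a.e. `(x,y)`, then `f` is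
`π^Y`-a.e. constant; in particular, if moreover `∫ f dπ^Y = 0` then `f = 0` `π^Y`-a.e. -/
theorem sinkhorn_poincare_rigidity
    {d : ℕ} (π : Measure (E d × E d)) [IsProbabilityMeasure π]
    (ρ : E d × E d → ℝ) (hρmeas : Measurable ρ)
    (hρpos : ∀ᵐ z ∂(volume : Measure (E d × E d)), 0 < ρ z)
    (hπ : π = volume.withDensity fun z => ENNReal.ofReal (ρ z))
    (f : E d → ℝ) (hf : MemLp f 2 (π.map Prod.snd))
    (hfix : ∀ᵐ z ∂π, f z.2 = Qc π (fun w => f w.2) z) :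
    (∃ c : ℝ, ∀ᵐ y ∂(π.map Prod.snd), f y = c) ∧
    ((∫ y, f y ∂(π.map Prod.snd)) = 0 → ∀ᵐ y ∂(π.map Prod.snd), f y = 0) :=
  sinkhorn_poincare_rigidity_general π ρ hρmeas hρpos hπ f hfix
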